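/- Let D be the m × m integer matrix whose row i − 1, for each 2 ≤ i ≤ m, is (−ℓ_{i,1}, …, −ℓ_{i,i−1}, d_{i−1}/d_i, 0, …, 0) (the entry d_{i−1}/d_i standing in column i and zeros thereafter), and whose last row is (b_1, …, b_m). Then det(D) = (−1)^m. -/

import Mathlib

open Finset

/-- `dseq a i` is `gcd(a 1, …, a i)`. -/
def dseq (a : ℕ → ℕ) (i : ℕ) : ℕ := Finset.gcd (Finset.Icc 1 i) a

/-- `BAm m a ℓ` says that the tuple `(ℓ 1, …, ℓ m)` belongs to `B(A_m)`. -/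
def BAm (m : ℕ) (a : ℕ → ℕ) (ℓ : ℕ → ℕ) : Prop :=
  (∀ j, (j < 1 ∨ m < j) → ℓ j = 0) ∧
    ∀ i, 2 ≤ i → i ≤ m → ℓ i < dseq a (i - 1) / dseq a i

/-- `Telescopic m a` says that `(a 1, …, a m)` is a telescopic sequence. -/
def Telescopic (m : ℕ) (a : ℕ → ℕ) : Prop :=
  2 ≤ m ∧ (∀ i, 1 ≤ i → i ≤ m → 2 ≤ a i) ∧ dseq a m = 1 ∧
    ∀ i, 2 ≤ i → i ≤ m → ∃ ℓ : ℕ → ℕ, (∀ j, (j < 1 ∨ i ≤ j) → ℓ j = 0) ∧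
      a i * dseq a (i - 1) = dseq a i * ∑ j ∈ Finset.Icc 1 m, ℓ j * a j

/-!
With `v = (a 1, …, a m)`, every row `i - 1` of `D` is orthogonal to `v`. Indeed, reducing
`Σ_j a j ℓ_{i,j} = a i · d_{i-1}/d_i` modulo `d_{k-1}` at the last index `k ≥ i` with
`ℓ_{i,k} ≠ 0` gives `d_{k-1}/d_k ∣ ℓ_{i,k}` (as `a k / d_k` is coprime to `d_{k-1}/d_k`),
contradicting `ℓ_{i,k} < d_{k-1}/d_k`; so the row is `(-ℓ_{i,1}, …, -ℓ_{i,m}) + (d_{i-1}/d_i) e_i`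
and its product with `v` vanishes. The last row gives `Σ a j b j = -1`, so `D v = -e_m`, and the
first coordinate of `adj(D) D v = det(D) v` reads `det(D) a 1 = -C`, where `C` is the determinant
of `D` with its last row replaced by `e_1`. Expanding `C` along that row leaves a lower triangular
matrix with diagonal `d_1/d_2, …, d_{m-1}/d_m`, which telescopes to `a 1 / d_m = a 1`.
-/

lemma dseq_succ (a : ℕ → ℕ) (j : ℕ) : dseq a (j + 1) = Nat.gcd (dseq a j) (a (j + 1)) := by
  rw [dseq, dseq, ← Finset.insert_Icc_right_eq_Icc_add_one (by omega), Finset.gcd_insert,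
    Nat.gcd_comm]
  rfl

lemma dseq_dvd_dseq (a : ℕ → ℕ) {j k : ℕ} (h : j ≤ k) : dseq a k ∣ dseq a j :=
  Finset.gcd_mono (Finset.Icc_subset_Icc_right h)

lemma dseq_dvd (a : ℕ → ℕ) {j k : ℕ} (h₁ : 1 ≤ k) (h₂ : k ≤ j) : dseq a j ∣ a k :=
  Finset.gcd_dvd (Finset.mem_Icc.2 ⟨h₁, h₂⟩)

lemma dseq_ne_zero (a : ℕ → ℕ) (ha : a 1 ≠ 0) {j : ℕ} (hj : 1 ≤ j) : dseq a j ≠ 0 :=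
  fun h => ha (Nat.eq_zero_of_zero_dvd (h ▸ dseq_dvd a le_rfl hj))

lemma dseq_mul_div_dseq (a : ℕ → ℕ) (j : ℕ) :
    dseq a (j + 1) * (dseq a j / dseq a (j + 1)) = dseq a j :=
  Nat.mul_div_cancel' (dseq_dvd_dseq a j.le_succ)

lemma dseq_dvd_mul_div_dseq (a : ℕ → ℕ) (j : ℕ) :
    dseq a j ∣ a (j + 1) * (dseq a j / dseq a (j + 1)) := by
  simpa only [dseq_mul_div_dseq] using
    mul_dvd_mul_right (dseq_dvd a (Nat.le_add_left 1 j) le_rfl) (dseq a j / dseq a (j + 1))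

lemma eq_mul_div_dseq_of_dseq_mul_eq {a : ℕ → ℕ} {j S : ℕ} (h₀ : dseq a (j + 1) ≠ 0)
    (h : dseq a (j + 1) * S = a (j + 1) * dseq a j) :
    S = a (j + 1) * (dseq a j / dseq a (j + 1)) :=
  Nat.eq_of_mul_eq_mul_left (Nat.pos_of_ne_zero h₀) (by rw [h, mul_left_comm, dseq_mul_div_dseq])

lemma prod_range_div_dseq_mul (a : ℕ → ℕ) (n : ℕ) :
    (∏ r ∈ Finset.range n, dseq a (r + 1) / dseq a (r + 2)) * dseq a (n + 1) = a 1 := by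
  induction n with
  | zero => simp [dseq]
  | succ n ih => rw [Finset.prod_range_succ, mul_assoc, mul_comm (_ / _), dseq_mul_div_dseq, ih]

lemma eq_zero_of_dseq_dvd_sum (a ℓ : ℕ → ℕ) {j : ℕ}
    (hlt : ℓ (j + 1) < dseq a j / dseq a (j + 1))
    (hdvd : dseq a j ∣ ∑ k ∈ Finset.Icc 1 (j + 1), a k * ℓ k) : ℓ (j + 1) = 0 := by
  set g := dseq a (j + 1)
  have hg : 0 < g := Nat.pos_of_ne_zero fun h => by simp [g, h] at hlt
  have hlast : dseq a j ∣ a (j + 1) * ℓ (j + 1) := by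
    rw [← Finset.insert_Icc_right_eq_Icc_add_one (by omega), Finset.sum_insert (by simp)] at hdvd
    refine (Nat.dvd_add_left (Finset.dvd_sum fun k hk => ?_)).1 hdvd
    exact (dseq_dvd a (Finset.mem_Icc.1 hk).1 (Finset.mem_Icc.1 hk).2).mul_right _
  have hcop : Nat.Coprime (dseq a j / g) (a (j + 1) / g) := by
    simpa only [g, dseq_succ] using Nat.coprime_div_gcd_div_gcd (dseq_succ a j ▸ hg)
  have hdvd' : dseq a j / g ∣ a (j + 1) / g * ℓ (j + 1) := by
    rw [← Nat.mul_dvd_mul_iff_left hg, ← mul_assoc, dseq_mul_div_dseq,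
      Nat.mul_div_cancel' (dseq_dvd a (by omega) le_rfl)]
    exact hlast
  exact Nat.eq_zero_of_dvd_of_lt (hcop.dvd_of_dvd_mul_left hdvd') hlt

lemma BAm.eq_zero_of_lt {m : ℕ} {a ℓ : ℕ → ℕ} (hB : BAm m a ℓ) {i : ℕ} (hi : 1 ≤ i)
    (hdvd : dseq a i ∣ ∑ k ∈ Finset.Icc 1 m, a k * ℓ k) {j : ℕ} (hij : i < j) : ℓ j = 0 := by
  suffices ∀ t j, i < j → m < j + t → ℓ j = 0 from this (m + 1) j hij (by omega)
  intro t
  induction t with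
  | zero => exact fun j _ hj => hB.1 j (Or.inr hj)
  | succ t ih =>
    intro j hij hj
    rcases lt_or_ge m j with hmj | hjm
    · exact hB.1 j (Or.inr hmj)
    obtain ⟨j, rfl⟩ : ∃ j', j = j' + 1 := ⟨j - 1, by omega⟩
    have htail : ∑ k ∈ Finset.Icc 1 (j + 1), a k * ℓ k = ∑ k ∈ Finset.Icc 1 m, a k * ℓ k :=
      Finset.sum_subset (Finset.Icc_subset_Icc_right hjm) fun k hk hk' => by
        simp only [Finset.mem_Icc] at hk hk'
        rw [ih k (by omega) (by omega), mul_zero]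
    refine eq_zero_of_dseq_dvd_sum a ℓ (hB.2 (j + 1) (by omega) hjm) ?_
    exact htail ▸ (dseq_dvd_dseq a (by omega : i ≤ j)).trans hdvd

theorem Matrix.det_eq_neg_one_pow_mul_prod_of_row_last_eq_single_zero {R : Type*} [CommRing R]
    {n : ℕ} (M : Matrix (Fin (n + 1)) (Fin (n + 1)) R) (hlast : M (Fin.last n) = Pi.single 0 1)
    (hzero : ∀ r c : Fin n, r < c → M r.castSucc c.succ = 0) :
    M.det = (-1) ^ n * ∏ r : Fin n, M r.castSucc r.succ := by
  rw [det_succ_row M (Fin.last n), Fintype.sum_eq_single 0 fun j hj => by simp [hlast, hj],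
    Fin.succAbove_last, Fin.succAbove_zero,
    det_of_isLowerTriangular (M.submatrix _ _) fun r c h => hzero r c h]
  simp [hlast]

theorem Matrix.det_mul_eq_neg_det_updateRow_of_mulVec_eq {R ι : Type*} [CommRing R] [Fintype ι]
    [DecidableEq ι] {A : Matrix ι ι R} {v : ι → R} {j : ι} (h : A.mulVec v = -Pi.single j 1)
    (i : ι) : A.det * v i = -(A.updateRow j (Pi.single i 1)).det := by
  simpa [mulVec_mulVec, adjugate_mul, smul_mulVec, mulVec_neg, adjugate_apply]
    using congrFun (congrArg A.adjugate.mulVec h) i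

lemma Fin.sum_univ_eq_sum_Icc {M : Type*} [AddCommMonoid M] (f : ℕ → M) (m : ℕ) :
    ∑ c : Fin m, f (c + 1) = ∑ k ∈ Finset.Icc 1 m, f k := by
  rw [Fin.sum_univ_eq_sum_range (fun k => f (k + 1)), Finset.range_eq_Ico, Finset.sum_Ico_add',
    zero_add, Finset.Ico_add_one_right_eq_Icc]

lemma sum_ite_mul_eq_zero {m : ℕ} (a ℓ : ℕ → ℕ) (p : ℕ) (i : Fin m)
    (hℓ : ∀ k, (i : ℕ) + 1 ≤ k → ℓ k = 0)
    (hsum : ∑ k ∈ Finset.Icc 1 m, a k * ℓ k = a (i + 1) * p) :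
    ∑ c : Fin m, (if (c : ℕ) + 1 < i + 1 then -(ℓ (c + 1) : ℤ)
      else if (c : ℕ) + 1 = i + 1 then (p : ℤ) else 0) * a (c + 1) = 0 := by
  have hterm : ∀ c : Fin m, (if (c : ℕ) + 1 < i + 1 then -(ℓ (c + 1) : ℤ)
      else if (c : ℕ) + 1 = i + 1 then (p : ℤ) else 0) * a (c + 1) =
      (if c = i then (a (i + 1) * p : ℤ) else 0) - (a (c + 1) * ℓ (c + 1) : ℕ) := by
    intro c
    rcases lt_trichotomy c i with h | rfl | h
    · simp [h.ne, Fin.lt_def.1 h, mul_comm]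
    · simp [hℓ _ le_rfl, mul_comm]
    · simp [h.ne', Fin.val_ne_iff.2 h.ne', hℓ (c + 1) (by omega), not_lt.2 (Fin.lt_def.1 h).le]
  rw [Fintype.sum_congr _ _ hterm, Finset.sum_sub_distrib, Fintype.sum_ite_eq',
    ← Nat.cast_sum, Fin.sum_univ_eq_sum_Icc (fun k => a k * ℓ k), hsum]
  push_cast
  ring

def dMatrix (a : ℕ → ℕ) (ℓmat : ℕ → ℕ → ℕ) (b : ℕ → ℤ) (m : ℕ) : Matrix (Fin m) (Fin m) ℤ :=
  Matrix.of fun r c =>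
    if r.val + 1 < m then
      (if c.val + 1 < r.val + 2 then -(ℓmat (r.val + 2) (c.val + 1) : ℤ)
       else if c.val + 1 = r.val + 2 then
         ((dseq a (r.val + 1) / dseq a (r.val + 2) : ℕ) : ℤ)
       else 0)
    else (b (c.val + 1) : ℤ)

section

variable {n : ℕ} {a : ℕ → ℕ} {ℓmat : ℕ → ℕ → ℕ} {b : ℕ → ℤ}

lemma dMatrix_mulVec_eq_neg_single_last (ha₁ : a 1 ≠ 0)
    (hℓ : ∀ i, 2 ≤ i → i ≤ n + 1 → BAm (n + 1) a (ℓmat i) ∧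
      dseq a i * ∑ j ∈ Finset.Icc 1 (n + 1), a j * ℓmat i j = a i * dseq a (i - 1))
    (hb : ∑ j ∈ Finset.Icc 1 (n + 1), (a j : ℤ) * b j = -1) :
    (dMatrix a ℓmat b (n + 1)).mulVec (fun c => (a (c + 1) : ℤ)) = -Pi.single (Fin.last n) 1 := by
  ext r
  rcases Fin.eq_castSucc_or_eq_last r with ⟨r, rfl⟩ | rfl
  · obtain ⟨hB, hsum⟩ := hℓ ((r : ℕ) + 2) (by omega) (by omega)
    have hsum' := eq_mul_div_dseq_of_dseq_mul_eq (dseq_ne_zero a ha₁ (by omega)) hsum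
    have hvanish : ∀ k, (r : ℕ) + 2 ≤ k → ℓmat (r + 2) k = 0 := fun k hk =>
      hB.eq_zero_of_lt (by omega) (hsum' ▸ dseq_dvd_mul_div_dseq a (r + 1)) (by omega)
    have hr : (r.castSucc : ℕ) + 1 < n + 1 := by simp
    simp only [Matrix.mulVec, dotProduct, dMatrix, Matrix.of_apply, hr, if_true, Pi.neg_apply,
      Pi.single_apply, Fin.castSucc_ne_last, if_false, neg_zero]
    exact sum_ite_mul_eq_zero a (ℓmat (r + 2)) _ r.succ hvanish hsum'
  · simp [Matrix.mulVec, dotProduct, dMatrix, ← hb, ← Fin.sum_univ_eq_sum_Icc, mul_comm]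

lemma det_updateRow_dMatrix_last (hdm : dseq a (n + 1) = 1) :
    ((dMatrix a ℓmat b (n + 1)).updateRow (Fin.last n) (Pi.single 0 1)).det = (-1) ^ n * a 1 := by
  set E := (dMatrix a ℓmat b (n + 1)).updateRow (Fin.last n) (Pi.single 0 1)
  have hentry : ∀ r c : Fin n, r ≤ c → E r.castSucc c.succ =
      if r = c then ((dseq a (r + 1) / dseq a (r + 2) : ℕ) : ℤ) else 0 := by
    intro r c hrc
    simp only [E, Matrix.updateRow_ne (Fin.castSucc_lt_last r).ne, dMatrix, Matrix.of_apply,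
      Fin.val_castSucc, Fin.val_succ, Fin.ext_iff]
    split_ifs <;> first | rfl | omega
  rw [Matrix.det_eq_neg_one_pow_mul_prod_of_row_last_eq_single_zero E (by simp [E])
    fun r c h => by rw [hentry r c h.le, if_neg h.ne]]
  have hprod := prod_range_div_dseq_mul a n
  rw [hdm, mul_one] at hprod
  simp only [hentry _ _ le_rfl, if_true]
  rw [Fin.prod_univ_eq_prod_range (fun r => ((dseq a (r + 1) / dseq a (r + 2) : ℕ) : ℤ)),
    ← Nat.cast_prod, hprod]

end

/-- Let `ℓmat i` (for `2 ≤ i ≤ m`) be the unique element of `B(A_m)` with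
`Σ_{j=1}^m a j * ℓmat i j = a i * d (i-1) / d i`, and let `b : ℕ → ℤ` satisfy
`a 1 * b 1 + ⋯ + a m * b m = −1`.  Let `D` be the `m × m` integer matrix whose
`r`-th row (for `r = 0, …, m−2`, corresponding to `i = r + 2`) is
`(−ℓ_{i,1}, …, −ℓ_{i,i−1}, d_{i−1}/d_i, 0, …, 0)` and whose last row is
`(b 1, …, b m)`.  Then `det D = (−1)^m`. -/
theorem det_D_eq_neg_one_pow (m : ℕ) (a : ℕ → ℕ) (hT : Telescopic m a)
    (ℓmat : ℕ → ℕ → ℕ)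
    (hℓ : ∀ i, 2 ≤ i → i ≤ m → BAm m a (ℓmat i) ∧
      dseq a i * ∑ j ∈ Finset.Icc 1 m, a j * ℓmat i j = a i * dseq a (i - 1))
    (b : ℕ → ℤ) (hb : ∑ j ∈ Finset.Icc 1 m, (a j : ℤ) * b j = -1)
    (D : Matrix (Fin m) (Fin m) ℤ)
    (hD : ∀ r c : Fin m, D r c =
      if r.val + 1 < m then
        (if c.val + 1 < r.val + 2 then -(ℓmat (r.val + 2) (c.val + 1) : ℤ)
         else if c.val + 1 = r.val + 2 then
           ((dseq a (r.val + 1) / dseq a (r.val + 2) : ℕ) : ℤ)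
         else 0)
      else (b (c.val + 1) : ℤ)) :
    D.det = (-1 : ℤ) ^ m := by
  obtain ⟨hm, ha, hdm, -⟩ := hT
  obtain ⟨n, rfl⟩ : ∃ n, m = n + 1 := ⟨m - 1, by omega⟩
  obtain rfl : D = dMatrix a ℓmat b (n + 1) := Matrix.ext hD
  have ha₁ : a 1 ≠ 0 := by have := ha 1 le_rfl (by omega); omega
  have hdet := Matrix.det_mul_eq_neg_det_updateRow_of_mulVec_eq
    (dMatrix_mulVec_eq_neg_single_last ha₁ hℓ hb) 0
  rw [det_updateRow_dMatrix_last hdm, Fin.val_zero, zero_add] at hdet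
  exact mul_right_cancel₀ (by exact_mod_cast ha₁) (hdet.trans (by ring))
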